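/- Let s = (s₁,s₂,s₃) ∈ ℝ³ with s₁,s₂,s₃ > 0 pairwise distinct, and suppose p_r(s) > 0 for all r = 1,2,3. Then there exists a = (a₁,a₂,a₃) ∈ ℝ³, arbitrarily close to a⁰(s), such that M₂₄(s,a) is positive definite, s_{r+1} + s_{r+2} - s_r + 3S(s)/(2s_r) + 7a_r > 0 for all r, and a_r < a_r⁰(s) for all r. (This establishes that homogeneous metrics on W²⁴ with sec > 0 that do not submerge onto the Cayley plane have strongly positive curvature; in particular W²⁴ admits homogeneous metrics with strongly positive curvature.) -/

import Mathlib

/-!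
At `a = a⁰(s)` the linear conditions hold with value `2 p_r(s) / s_r > 0`, the leading
`2 × 2` minor of `M₂₄` is `4 (s₁ - s₂)² S(s) / s₃² > 0` (note `S = p₁ + p₂ + p₃ > 0`), but
`det M₂₄ = 0`.
Lowering only the coordinate `a_g` of the median `s_g` by `ε` makes the determinant
`4ε (C - 4 s_g ε)` with `C > 0`, so for small `ε > 0` Sylvester's criterion applies and all
conditions hold strictly. They are open conditions, so lowering every coordinate slightly more
keeps them and gives `a < a⁰(s)`.
-/

open Matrix

/-- `S(s) = 2(s₁s₂+s₁s₃+s₂s₃) - (s₁²+s₂²+s₃²)`. -/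
noncomputable def Spoly (s : Fin 3 → ℝ) : ℝ :=
  2 * (s 0 * s 1 + s 0 * s 2 + s 1 * s 2) - (s 0 ^ 2 + s 1 ^ 2 + s 2 ^ 2)

/-- `p_r(s) = (s_{r+1}-s_{r+2})² + 2 s_r (s_{r+1}+s_{r+2}) - 3 s_r²`, indices mod 3. -/
noncomputable def ppoly (s : Fin 3 → ℝ) (r : Fin 3) : ℝ :=
  (s (r + 1) - s (r + 2)) ^ 2 + 2 * s r * (s (r + 1) + s (r + 2)) - 3 * s r ^ 2

/-- `a_r⁰(s) = ((s_{r+1}-s_{r+2})² - s_r²)/(2 s_r)`, indices mod 3. -/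
noncomputable def a0 (s : Fin 3 → ℝ) (r : Fin 3) : ℝ :=
  ((s (r + 1) - s (r + 2)) ^ 2 - s r ^ 2) / (2 * s r)

/-- First block of the modified curvature operator of `(W²⁴, g_s)`. -/
noncomputable def M24 (s a : Fin 3 → ℝ) : Matrix (Fin 3) (Fin 3) ℝ :=
  !![4 * s 0,                   Spoly s / s 2 - 2 * a 2,  Spoly s / s 1 - 2 * a 1;
     Spoly s / s 2 - 2 * a 2,   4 * s 1,                  Spoly s / s 0 - 2 * a 0;
     Spoly s / s 1 - 2 * a 1,   Spoly s / s 0 - 2 * a 0,  4 * s 2]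

open Filter Topology

theorem Matrix.posDef_of_fin_three {A : Matrix (Fin 3) (Fin 3) ℝ} (hA : A.IsHermitian)
    (h₀ : 0 < A 0 0) (h₁ : 0 < A 0 0 * A 1 1 - A 0 1 ^ 2) (h₂ : 0 < A.det) : A.PosDef := by
  refine .of_dotProduct_mulVec_pos hA fun x hx => ?_
  have hsymm (i j : Fin 3) : A j i = A i j := by simpa using hA.apply i j
  set m := A 0 0 * A 1 1 - A 0 1 ^ 2
  set e := A 0 0 * A 1 2 - A 0 1 * A 0 2
  -- Completing the square twice (the `LDLᵀ` decomposition of `A`).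
  have hsq : A 0 0 * m * (star x ⬝ᵥ A *ᵥ x) =
      m * (A 0 0 * x 0 + A 0 1 * x 1 + A 0 2 * x 2) ^ 2 + (m * x 1 + e * x 2) ^ 2
        + A 0 0 * A.det * x 2 ^ 2 := by
    simp only [star_trivial, dotProduct, mulVec, Fin.sum_univ_three, det_fin_three, hsymm 1 0,
      hsymm 2 0, hsymm 2 1, m, e]
    ring
  have h₁' : 0 ≤ m * (A 0 0 * x 0 + A 0 1 * x 1 + A 0 2 * x 2) ^ 2 := by positivity
  have h₂' : 0 ≤ A 0 0 * A.det * x 2 ^ 2 := by positivity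
  have hpos : 0 < m * (A 0 0 * x 0 + A 0 1 * x 1 + A 0 2 * x 2) ^ 2 ∨
      0 < (m * x 1 + e * x 2) ^ 2 ∨ 0 < A 0 0 * A.det * x 2 ^ 2 := by
    rcases eq_or_ne (x 2) 0 with hx₂ | hx₂
    · rcases eq_or_ne (x 1) 0 with hx₁ | hx₁
      · have hx₀ : x 0 ≠ 0 := fun hx₀ => hx (by ext i; fin_cases i <;> assumption)
        left; simp only [hx₁, hx₂, mul_zero, add_zero]; positivity
      · right; left; simp only [hx₂, mul_zero, add_zero]; positivity
    · right; right; positivity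
  refine pos_of_mul_pos_right (hsq ▸ ?_) (mul_pos h₀ h₁).le
  rcases hpos with h | h | h <;> linarith [sq_nonneg (m * x 1 + e * x 2)]

theorem Spoly_eq_sum_ppoly (s : Fin 3 → ℝ) : Spoly s = ppoly s 0 + ppoly s 1 + ppoly s 2 := by
  simp only [Spoly, ppoly, Fin.isValue, Fin.reduceAdd, zero_add]
  ring

theorem Spoly_pos {s : Fin 3 → ℝ} (hp : ∀ r, 0 < ppoly s r) : 0 < Spoly s := by
  rw [Spoly_eq_sum_ppoly]
  linarith [hp 0, hp 1, hp 2]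

theorem exists_median (s : Fin 3 → ℝ) (hd : s 0 ≠ s 1 ∧ s 0 ≠ s 2 ∧ s 1 ≠ s 2) :
    ∃ g : Fin 3, 0 < (s (g + 2) - s g) * (s g - s (g + 1)) := by
  by_contra! h
  have h₀ := h 0; have h₁ := h 1; have h₂ := h 2
  simp only [Fin.isValue, Fin.reduceAdd] at h₀ h₁ h₂
  have h₀₁ := sub_ne_zero.2 hd.1; have h₁₂ := sub_ne_zero.2 hd.2.2
  have h₂₀ := sub_ne_zero.2 hd.2.1.symm
  -- The three products multiply to a nonzero square.
  have hsq : 0 < ((s 0 - s 1) * (s 1 - s 2) * (s 2 - s 0)) ^ 2 := by positivity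
  nlinarith [mul_nonneg (mul_nonneg (neg_nonneg.2 h₀) (neg_nonneg.2 h₁)) (neg_nonneg.2 h₂)]

theorem IsOpen.exists_forall_lt_mem {ι : Type*} [Fintype ι] {U : Set (ι → ℝ)} (hU : IsOpen U)
    {x : ι → ℝ} (hx : x ∈ U) : ∃ y ∈ U, ∀ i, y i < x i := by
  obtain ⟨ε, hε, hball⟩ := Metric.isOpen_iff.1 hU x hx
  refine ⟨x - fun _ => ε / 2, hball ?_, fun i => by simp [hε]⟩
  rw [Metric.mem_ball, dist_pi_lt_iff hε]
  intro i
  simpa only [Pi.sub_apply, dist_self_sub_left, norm_div, Real.norm_eq_abs, abs_of_pos hε,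
    abs_two, half_lt_self_iff] using hε

theorem add_seven_mul_a0_eq (s : Fin 3 → ℝ) (hs : ∀ r, 0 < s r) (r : Fin 3) :
    s (r + 1) + s (r + 2) - s r + 3 * Spoly s / (2 * s r) + 7 * a0 s r = 2 * ppoly s r / s r := by
  have := (hs 0).ne'; have := (hs 1).ne'; have := (hs 2).ne'
  fin_cases r <;>
  · simp only [Spoly, ppoly, a0, Fin.isValue, Fin.reduceAdd, Fin.zero_eta, Fin.mk_one,
      Fin.reduceFinMk, zero_add]
    field_simp
    ring

theorem minor_M24_a0 (s : Fin 3 → ℝ) (hs₂ : 0 < s 2) :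
    4 * s 0 * (4 * s 1) - (Spoly s / s 2 - 2 * a0 s 2) ^ 2 =
      4 * (s 0 - s 1) ^ 2 * Spoly s / s 2 ^ 2 := by
  simp only [Spoly, a0, Fin.isValue, Fin.reduceAdd]
  field_simp
  ring

theorem det_M24_a0_sub_single (s : Fin 3 → ℝ) (hs : ∀ r, 0 < s r) (g : Fin 3) (ε : ℝ) :
    (M24 s (a0 s - Pi.single g ε)).det =
      4 * ε * (4 * Spoly s * ((s (g + 2) - s g) * (s g - s (g + 1))) / (s (g + 1) * s (g + 2))
        - 4 * s g * ε) := by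
  have := (hs 0).ne'; have := (hs 1).ne'; have := (hs 2).ne'
  fin_cases g <;>
  · simp only [M24, det_fin_three, of_apply, cons_val', cons_val_zero, cons_val_one, cons_val,
      cons_val_fin_one, Pi.sub_apply, Pi.single_apply, Spoly, a0, Fin.isValue, Fin.reduceAdd,
      Fin.zero_eta, Fin.mk_one, Fin.reduceFinMk, Fin.reduceEq, if_true, if_false, zero_add,
      sub_zero]
    field_simp
    ring

theorem eventually_det_M24_a0_sub_single_pos (s : Fin 3 → ℝ) (hs : ∀ r, 0 < s r)
    (hS : 0 < Spoly s) {g : Fin 3} (hg : 0 < (s (g + 2) - s g) * (s g - s (g + 1))) :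
    ∀ᶠ ε in 𝓝[>] 0, 0 < (M24 s (a0 s - Pi.single g ε)).det := by
  set C := 4 * Spoly s * ((s (g + 2) - s g) * (s g - s (g + 1))) / (s (g + 1) * s (g + 2))
    with hC_def
  have hC : 0 < C := div_pos (by positivity) (mul_pos (hs _) (hs _))
  have hsg := hs g
  filter_upwards [Ioo_mem_nhdsGT (div_pos hC (by positivity : (0 : ℝ) < 4 * s g))]
    with ε ⟨hε, hεC⟩
  rw [det_M24_a0_sub_single s hs, ← hC_def]
  rw [lt_div_iff₀ (by positivity)] at hεC
  have : 0 < C - 4 * s g * ε := by linarith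
  positivity

theorem posDef_M24 {s a : Fin 3 → ℝ} (hs₀ : 0 < s 0)
    (hminor : 0 < 4 * s 0 * (4 * s 1) - (Spoly s / s 2 - 2 * a 2) ^ 2)
    (hdet : 0 < (M24 s a).det) : (M24 s a).PosDef :=
  Matrix.posDef_of_fin_three (by ext i j; fin_cases i <;> fin_cases j <;> simp [M24])
    (by simpa [M24] using hs₀) (by simpa [M24] using hminor) hdet

theorem continuous_det_M24 (s : Fin 3 → ℝ) : Continuous fun a => (M24 s a).det := by
  unfold M24
  fun_prop

def admissibleSet (s : Fin 3 → ℝ) (δ : ℝ) : Set (Fin 3 → ℝ) :=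
  {a | (∀ r, |a r - a0 s r| < δ ∧
      0 < s (r + 1) + s (r + 2) - s r + 3 * Spoly s / (2 * s r) + 7 * a r) ∧
    0 < 4 * s 0 * (4 * s 1) - (Spoly s / s 2 - 2 * a 2) ^ 2}

theorem isOpen_admissibleSet (s : Fin 3 → ℝ) (δ : ℝ) : IsOpen (admissibleSet s δ) := by
  simp only [admissibleSet, Set.ofPred_and, Set.ofPred_forall]
  exact (isOpen_iInter_of_finite fun r => (isOpen_lt (by fun_prop) continuous_const).inter
    (isOpen_lt continuous_const (by fun_prop))).inter (isOpen_lt continuous_const (by fun_prop))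

theorem a0_mem_admissibleSet {s : Fin 3 → ℝ} (hs : ∀ r, 0 < s r) (h₀₁ : s 0 ≠ s 1)
    (hp : ∀ r, 0 < ppoly s r) {δ : ℝ} (hδ : 0 < δ) : a0 s ∈ admissibleSet s δ := by
  have := Spoly_pos hp; have := sub_ne_zero.2 h₀₁; have := hs 2
  refine ⟨fun r => ⟨by simpa using hδ, ?_⟩, ?_⟩
  · rw [add_seven_mul_a0_eq s hs]
    exact div_pos (mul_pos two_pos (hp r)) (hs r)
  · rw [minor_M24_a0 s (hs 2)]
    positivity

/-- If `s₁, s₂, s₃ > 0` are pairwise distinct and `p_r(s) > 0` for all `r`, then there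
exists `a` arbitrarily close to `a⁰(s)` making all blocks positive definite. -/
theorem stronglyPos_W24_exists (s : Fin 3 → ℝ) (hs : ∀ r, 0 < s r)
    (hd : s 0 ≠ s 1 ∧ s 0 ≠ s 2 ∧ s 1 ≠ s 2) (hp : ∀ r, 0 < ppoly s r) :
    ∀ δ : ℝ, 0 < δ →
      ∃ a : Fin 3 → ℝ, (∀ r, |a r - a0 s r| < δ) ∧
        (M24 s a).PosDef ∧
        (∀ r, 0 < s (r + 1) + s (r + 2) - s r + 3 * Spoly s / (2 * s r) + 7 * a r) ∧
        (∀ r, a r < a0 s r) := by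
  intro δ hδ
  obtain ⟨g, hg⟩ := exists_median s hd
  have hpath : Tendsto (fun ε => a0 s - Pi.single g ε) (𝓝[>] 0) (𝓝 (a0 s)) := by
    have : Continuous fun ε : ℝ => a0 s - Pi.single g ε :=
      continuous_const.sub (continuous_single (A := fun _ : Fin 3 => ℝ) g)
    exact (this.tendsto' 0 _ (by simp)).mono_left nhdsWithin_le_nhds
  have hU := (isOpen_admissibleSet s δ).mem_nhds (a0_mem_admissibleSet hs hd.1 hp hδ)
  obtain ⟨ε, hε : 0 < ε, hεU, hεdet⟩ := (eventually_mem_nhdsWithin.and <|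
    (hpath.eventually hU).and (eventually_det_M24_a0_sub_single_pos s hs (Spoly_pos hp) hg)).exists
  have hV : IsOpen (admissibleSet s δ ∩ {a | 0 < (M24 s a).det}) :=
    (isOpen_admissibleSet s δ).inter (isOpen_lt continuous_const (continuous_det_M24 s))
  obtain ⟨a, ⟨⟨hnear, hminor⟩, hdet⟩, hlt⟩ := hV.exists_forall_lt_mem ⟨hεU, hεdet⟩
  refine ⟨a, fun r => (hnear r).1, posDef_M24 (hs 0) hminor hdet, fun r => (hnear r).2,
    fun r => (hlt r).trans_le ?_⟩
  rw [Pi.sub_apply, sub_le_self_iff, Pi.single_apply]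
  split_ifs <;> simp [hε.le]
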